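/- Let λ > 0 with λ² > 2 and define e(r) = 2λ²(1 + cos(r)²) / (λ² − (λ² − 1)cos(r)²)² for r ∈ [0, π/2]. Then ∫₀^{π/2} e(r)² sin(r) dr < 128 λ². -/

import Mathlib

/-!
Write `a = √(1 - λ⁻²)`, so that `λ² - (λ² - 1) cos² r = λ² (1 - a cos r)(1 + a cos r)`.
On `[0, π/2]` this gives `e(r) ≤ 4 / (λ² (1 - a cos r)²)`, and (substituting `t = cos r`)
the majorant `16 sin r / (λ⁴ (1 - a cos r)⁴)` of `e(r)² sin r` integrates to
`16 ((1 - a)⁻³ - 1) / (3 a λ⁴)`.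
Since `(1 - a)⁻¹ = λ² (1 + a)`, the claim reduces to `(1 + a)³ < 24 a`,
which holds because `1/3 < a < 1`.
-/

open Real Set MeasureTheory

noncomputable def energyDensity (l r : ℝ) : ℝ :=
  2 * l ^ 2 * (1 + cos r ^ 2) / (l ^ 2 - (l ^ 2 - 1) * cos r ^ 2) ^ 2

lemma one_sub_mul_cos_pos {a r : ℝ} (ha : a < 1) (hr : 0 ≤ cos r) : 0 < 1 - a * cos r := by
  rcases le_or_gt a 0 with ha0 | ha0
  · nlinarith [mul_nonpos_of_nonpos_of_nonneg ha0 hr]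
  · nlinarith [cos_le_one r]

lemma cos_nonneg_of_mem_uIcc_zero_pi_div_two {r : ℝ} (hr : r ∈ uIcc 0 (π / 2)) :
    0 ≤ cos r := by
  rw [uIcc_of_le (by positivity)] at hr
  exact cos_nonneg_of_mem_Icc ⟨by linarith [hr.1, pi_pos], hr.2⟩

lemma hasDerivAt_inv_one_sub_mul_cos_pow_three {a r : ℝ} (ha : a ≠ 0)
    (hr : 1 - a * cos r ≠ 0) :
    HasDerivAt (fun r ↦ -((1 - a * cos r) ^ 3)⁻¹ / (3 * a))
      (sin r / (1 - a * cos r) ^ 4) r := by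
  have hbase : HasDerivAt (fun r ↦ 1 - a * cos r) (a * sin r) r := by
    simpa using ((hasDerivAt_cos r).const_mul a).const_sub 1
  have hinv_cube := (hbase.fun_pow 3).fun_inv (pow_ne_zero 3 hr)
  refine (hinv_cube.fun_neg.div_const (3 * a)).congr_deriv ?_
  field_simp
  ring

lemma intervalIntegrable_sin_div_one_sub_mul_cos_pow_four {a : ℝ} (ha : a < 1) :
    IntervalIntegrable (fun r ↦ sin r / (1 - a * cos r) ^ 4) volume 0 (π / 2) :=
  ContinuousOn.intervalIntegrable <| continuous_sin.continuousOn.div (by fun_prop) fun r hr ↦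
    (pow_pos (one_sub_mul_cos_pos ha (cos_nonneg_of_mem_uIcc_zero_pi_div_two hr)) 4).ne'

lemma integral_sin_div_one_sub_mul_cos_pow_four {a : ℝ} (ha0 : a ≠ 0) (ha1 : a < 1) :
    ∫ r in (0 : ℝ)..(π / 2), sin r / (1 - a * cos r) ^ 4
      = (((1 - a) ^ 3)⁻¹ - 1) / (3 * a) := by
  rw [intervalIntegral.integral_eq_sub_of_hasDerivAt (fun r hr ↦
      hasDerivAt_inv_one_sub_mul_cos_pow_three ha0
        (one_sub_mul_cos_pos ha1 (cos_nonneg_of_mem_uIcc_zero_pi_div_two hr)).ne')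
    (intervalIntegrable_sin_div_one_sub_mul_cos_pow_four ha1)]
  simp only [cos_pi_div_two, cos_zero]
  ring

lemma energyDensity_sq_le {a l r : ℝ} (ha0 : 0 ≤ a) (ha1 : a < 1)
    (hla : l ^ 2 * (1 - a ^ 2) = 1) (hr : 0 ≤ cos r) :
    energyDensity l r ^ 2 ≤ 16 / l ^ 4 / (1 - a * cos r) ^ 4 := by
  have hac : 0 < 1 - a * cos r := one_sub_mul_cos_pos ha1 hr
  have hl : 0 < l ^ 2 := by nlinarith [sq_nonneg a]
  have hfactor : l ^ 2 - (l ^ 2 - 1) * cos r ^ 2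
      = l ^ 2 * (1 - a * cos r) * (1 + a * cos r) := by
    linear_combination -(cos r ^ 2) * hla
  have hden : l ^ 2 * (1 - a * cos r) ≤ l ^ 2 - (l ^ 2 - 1) * cos r ^ 2 := by
    rw [hfactor]
    nlinarith [mul_nonneg (mul_pos hl hac).le (mul_nonneg ha0 hr)]
  have hnum : 2 * l ^ 2 * (1 + cos r ^ 2) ≤ 4 * l ^ 2 := by nlinarith [cos_sq_le_one r]
  have hle : energyDensity l r ≤ 4 * l ^ 2 / (l ^ 2 * (1 - a * cos r)) ^ 2 :=
    div_le_div₀ (by positivity) hnum (by positivity) (pow_le_pow_left₀ (by positivity) hden 2)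
  calc energyDensity l r ^ 2 ≤ (4 * l ^ 2 / (l ^ 2 * (1 - a * cos r)) ^ 2) ^ 2 :=
        pow_le_pow_left₀ (by unfold energyDensity; positivity) hle 2
    _ = 16 / l ^ 4 / (1 - a * cos r) ^ 4 := by field_simp; ring

lemma integral_energyDensity_sq_mul_sin_le {a l : ℝ} (ha0 : 0 < a) (ha1 : a < 1)
    (hla : l ^ 2 * (1 - a ^ 2) = 1) :
    ∫ r in (0 : ℝ)..(π / 2), energyDensity l r ^ 2 * sin r
      ≤ 16 / l ^ 4 * ((((1 - a) ^ 3)⁻¹ - 1) / (3 * a)) := by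
  have hpi : 0 ≤ π / 2 := by positivity
  rw [← integral_sin_div_one_sub_mul_cos_pow_four ha0.ne' ha1,
    ← intervalIntegral.integral_const_mul, intervalIntegral.integral_of_le hpi,
    intervalIntegral.integral_of_le hpi]
  refine setIntegral_mono_of_nonneg (fun r hr ↦ ?_) (fun r hr ↦ ?_)
    ((intervalIntegrable_sin_div_one_sub_mul_cos_pow_four ha1).const_mul _).1
  · exact mul_nonneg (sq_nonneg _) (sin_nonneg_of_nonneg_of_le_pi hr.1.le (by linarith [hr.2]))
  · have hcos : 0 ≤ cos r := cos_nonneg_of_mem_Icc ⟨by linarith [hr.1, pi_pos], hr.2⟩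
    have hsin : 0 ≤ sin r := sin_nonneg_of_nonneg_of_le_pi hr.1.le (by linarith [hr.2])
    calc energyDensity l r ^ 2 * sin r ≤ 16 / l ^ 4 / (1 - a * cos r) ^ 4 * sin r :=
          mul_le_mul_of_nonneg_right (energyDensity_sq_le ha0.le ha1 hla hcos) hsin
      _ = 16 / l ^ 4 * (sin r / (1 - a * cos r) ^ 4) := by ring

lemma sixteen_div_pow_four_mul_lt {a l : ℝ} (ha3 : 1 / 3 < a) (ha1 : a < 1)
    (hla : l ^ 2 * (1 - a ^ 2) = 1) :
    16 / l ^ 4 * ((((1 - a) ^ 3)⁻¹ - 1) / (3 * a)) < 128 * l ^ 2 := by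
  have hinv : ((1 - a) ^ 3)⁻¹ = (l ^ 2 * (1 + a)) ^ 3 := by
    have h : (1 - a) * (l ^ 2 * (1 + a)) = 1 := by linear_combination hla
    rw [← inv_pow, inv_eq_of_mul_eq_one_right h]
  have ha0 : 0 < a := by linarith
  have hl0 : l ≠ 0 := by rintro rfl; simp at hla
  have hcube : (1 + a) ^ 3 < 24 * a := by nlinarith
  rw [hinv, div_mul_div_comm, div_lt_iff₀ (by positivity)]
  nlinarith [mul_lt_mul_of_pos_left hcube (pow_pos (by positivity : (0 : ℝ) < l ^ 2) 3)]

theorem second_order_energy_estimate_general (l : ℝ) (hl2 : 2 < l ^ 2) :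
    (∫ r in (0 : ℝ)..(π / 2),
        (2 * l ^ 2 * (1 + cos r ^ 2) / (l ^ 2 - (l ^ 2 - 1) * cos r ^ 2) ^ 2) ^ 2 * sin r)
      < 128 * l ^ 2 := by
  have hlt : 1 / l ^ 2 < 1 / 2 := one_div_lt_one_div_of_lt two_pos hl2
  have hpos : 0 < 1 / l ^ 2 := by positivity
  obtain ⟨a, ha3, ha1, hla⟩ : ∃ a : ℝ, 1 / 3 < a ∧ a < 1 ∧ l ^ 2 * (1 - a ^ 2) = 1 := by
    refine ⟨√(1 - 1 / l ^ 2), ?_, ?_, ?_⟩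
    · rw [lt_sqrt (by norm_num)]; linarith
    · rw [sqrt_lt' one_pos]; linarith
    · rw [sq_sqrt (by linarith), sub_sub_cancel, mul_one_div_cancel (by positivity)]
  calc _ = ∫ r in (0 : ℝ)..(π / 2), energyDensity l r ^ 2 * sin r := rfl
    _ ≤ 16 / l ^ 4 * ((((1 - a) ^ 3)⁻¹ - 1) / (3 * a)) :=
      integral_energyDensity_sq_mul_sin_le (by linarith) ha1 hla
    _ < 128 * l ^ 2 := sixteen_div_pow_four_mul_lt ha3 ha1 hla

/-- Estimate (3.13): for `λ > 0` with `λ² > 2`, the energy density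
`e(r) = 2λ²(1 + cos² r)/(λ² − (λ² − 1)cos² r)²` satisfies
`∫₀^{π/2} e(r)² sin r dr < 128 λ²`. -/
theorem second_order_energy_estimate (l : ℝ) (hl : 0 < l) (hl2 : 2 < l ^ 2) :
    (∫ r in (0 : ℝ)..(π / 2),
        (2 * l ^ 2 * (1 + cos r ^ 2) / (l ^ 2 - (l ^ 2 - 1) * cos r ^ 2) ^ 2) ^ 2 * sin r)
      < 128 * l ^ 2 :=
  second_order_energy_estimate_general l hl2
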